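/- arXiv:1707.07967 — 3 statements merged into one kernel-verified Lean document; each statement's English description precedes it below -/
import Mathlib

section
/- (Time derivative of the Legendre coefficients) Let u : [0,1] × [0,∞) → ℝ have continuous partial derivatives ∂ₜu, ∂ₓu, ∂ₓₓu, and satisfy the heat equation ∂ₜu(x,t) = γ ∂ₓₓu(x,t) on (0,1) with ∂ₓu(1,t) = 0, where γ > 0. Then for every t > 0: (1/γ)·d/dt ⟨u(·,t), L_0⟩ = −∂ₓu(0,t); (1/γ)·d/dt ⟨u(·,t), L_1⟩ = 2u(0,t) − 2u(1,t) + ∂ₓu(0,t); and for every k ≥ 2, (1/γ)·d/dt ⟨u(·,t), L_k⟩ = Σ_{j=1}^{k−1} Σ_{i=0}^{j−1} ℓ_{kj} ℓ_{ji} ⟨u(·,t), L_i⟩ + u(0,t)·Σ_{j=0}^{k−1} ℓ_{kj} (−1)^j − u(1,t)·Σ_{j=0}^{k−1} ℓ_{kj} − (−1)^k ∂ₓu(0,t). -/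
/-!
Differentiating under the integral sign, using the heat equation and integrating by parts twice
gives `(1/γ) d/dt ⟨u, φ⟩ = [∂ₓu φ - u φ']₀¹ + ⟨u, φ''⟩` for every `C²` test function `φ`.
For `φ = L_k` the boundary terms come from `L_k(1) = 1`, `L_k(0) = (-1)^k` and the Neumann
condition, and `⟨u, L_k''⟩` is expanded by applying `L_k' = ∑_{j<k} ℓ_{kj} L_j` twice.
That identity follows by induction from `L_{k+2}' = (4k+6) L_{k+1} + L_k'`, which is Rodrigues'
formula combined with `((x²-x)^{k+2})'' = (k+2)(4k+6)(x²-x)^{k+1} + (k+2)(k+1)(x²-x)^k`,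
itself a consequence of `(2x-1)² = 4(x²-x) + 1`.
-/

/-- The shifted Legendre polynomial on `[0,1]`: `L_k(x) = (1/k!) dᵏ/dxᵏ [(x² - x)ᵏ]`. -/
noncomputable def shiftedLegendre (k : ℕ) : ℝ → ℝ :=
  fun x => (1 / (Nat.factorial k : ℝ)) * iteratedDeriv k (fun y => (y ^ 2 - y) ^ k) x

/-- `ℓ_{kj} = (2j+1)(1−(−1)^{k+j})` if `j ≤ k−1`, and `ℓ_{kj} = 0` if `j ≥ k`. -/
noncomputable def ell (k j : ℕ) : ℝ :=
  if j < k then (2 * (j : ℝ) + 1) * (1 - (-1 : ℝ) ^ (k + j)) else 0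

section ShiftedLegendrePoly

open Polynomial Nat

theorem Polynomial.iteratedDeriv_eval {𝕜 : Type*} [NontriviallyNormedField 𝕜] (p : 𝕜[X])
    (k : ℕ) :
    iteratedDeriv k (fun x => p.eval x) = fun x => (derivative^[k] p).eval x := by
  induction k generalizing p with
  | zero => simp
  | succ k ih =>
    rw [iteratedDeriv_succ', Function.iterate_succ_apply, ← ih]
    congr 1
    ext x
    exact p.deriv

theorem Polynomial.eval_iterate_derivative_X_sub_C_pow_mul {R : Type*} [CommRing R] (a : R)
    (k : ℕ) (q : R[X]) :
    (derivative^[k] ((X - C a) ^ k * q)).eval a = k ! * q.eval a := by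
  rw [iterate_derivative_mul, eval_finsetSum, Finset.sum_eq_single 0]
  · simp [iterate_derivative_X_sub_pow, Nat.descFactorial_self]
  · intro i hi hi0
    rw [Finset.mem_range] at hi
    simp [iterate_derivative_X_sub_pow, Nat.sub_sub_self (Nat.le_of_lt_succ hi), hi0]
  · simp

theorem Polynomial.iterate_derivative_two_X_sq_sub_X_pow {R : Type*} [CommRing R] (k : ℕ) :
    derivative^[2] ((X ^ 2 - X : R[X]) ^ (k + 2))
      = C (((k : R) + 2) * (4 * k + 6)) * (X ^ 2 - X) ^ (k + 1)
        + C (((k : R) + 2) * (k + 1)) * (X ^ 2 - X) ^ k := by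
  have hw : derivative (X ^ 2 - X : R[X]) = 2 * X - 1 := by
    rw [derivative_sub, derivative_X_sq, derivative_X, C_ofNat]
  simp only [Function.iterate_succ, Function.iterate_zero, Function.comp_apply, id,
    derivative_pow_succ, derivative_mul, derivative_C, hw, derivative_sub, derivative_X,
    derivative_one]
  simp only [map_add, map_mul, map_natCast, map_one, C_ofNat, derivative_ofNat]
  push_cast
  ring

-- Mathlib's `Polynomial.shiftedLegendre k` is `(-1) ^ k` times this polynomial.
noncomputable def shiftedLegendrePoly (k : ℕ) : ℝ[X] :=
  C (k ! : ℝ)⁻¹ * derivative^[k] ((X ^ 2 - X) ^ k)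

theorem shiftedLegendre_eq_eval (k : ℕ) :
    _root_.shiftedLegendre k = fun x => (shiftedLegendrePoly k).eval x := by
  have h := iteratedDeriv_eval ((X ^ 2 - X : ℝ[X]) ^ k) k
  simp only [eval_pow, eval_sub, eval_X] at h
  ext x
  simp [_root_.shiftedLegendre, shiftedLegendrePoly, h]

theorem shiftedLegendrePoly_eval_one (k : ℕ) : (shiftedLegendrePoly k).eval 1 = 1 := by
  have h := eval_iterate_derivative_X_sub_C_pow_mul (1 : ℝ) k (X ^ k)
  rw [← mul_pow, show (X - C 1) * X = (X ^ 2 - X : ℝ[X]) by rw [C_1]; ring] at h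
  simp [shiftedLegendrePoly, h, k.factorial_ne_zero]

theorem shiftedLegendrePoly_eval_zero (k : ℕ) :
    (shiftedLegendrePoly k).eval 0 = (-1) ^ k := by
  have h := eval_iterate_derivative_X_sub_C_pow_mul (0 : ℝ) k ((X - 1) ^ k)
  rw [← mul_pow, show (X - C 0) * (X - 1) = (X ^ 2 - X : ℝ[X]) by rw [C_0]; ring] at h
  simp [shiftedLegendrePoly, h, k.factorial_ne_zero]

theorem derivative_shiftedLegendrePoly_add_two (k : ℕ) :
    derivative (shiftedLegendrePoly (k + 2))
      = C (4 * (k : ℝ) + 6) * shiftedLegendrePoly (k + 1) + derivative (shiftedLegendrePoly k) := by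
  have hD : derivative (derivative^[k + 2] ((X ^ 2 - X : ℝ[X]) ^ (k + 2)))
      = derivative^[k + 1] (derivative^[2] ((X ^ 2 - X : ℝ[X]) ^ (k + 2))) := by
    rw [← Function.iterate_succ_apply' derivative, ← Function.iterate_add_apply]
  simp only [shiftedLegendrePoly, derivative_C_mul, hD, iterate_derivative_two_X_sq_sub_X_pow,
    iterate_map_add, iterate_derivative_C_mul, ← Function.iterate_succ_apply' derivative]
  simp only [mul_add, ← mul_assoc, ← C_mul]
  congr 3 <;>
  · simp only [Nat.factorial_succ]
    push_cast
    field_simp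
    ring

theorem ell_add_two_of_le {k j : ℕ} (h : j ≤ k) : ell (k + 2) j = ell k j := by
  rcases h.lt_or_eq with h | rfl
  · simp [ell, h, show j < k + 2 by omega, pow_add]
  · simp [ell, Even.neg_one_pow (⟨j + 1, by ring⟩ : Even (j + 2 + j))]

theorem ell_add_two_self_add_one (k : ℕ) : ell (k + 2) (k + 1) = 4 * k + 6 := by
  simp only [ell, show k + 1 < k + 2 by omega, if_true,
    show k + 2 + (k + 1) = 2 * (k + 1) + 1 by ring, pow_succ, pow_mul]
  push_cast
  ring

theorem derivative_shiftedLegendrePoly :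
    ∀ k, derivative (shiftedLegendrePoly k)
      = ∑ j ∈ Finset.range k, C (ell k j) * shiftedLegendrePoly j
  | 0 => by simp [shiftedLegendrePoly]
  | 1 => by simp [shiftedLegendrePoly, ell]
  | k + 2 => by
    have hlow : ∑ j ∈ Finset.range k, C (ell (k + 2) j) * shiftedLegendrePoly j
        = ∑ j ∈ Finset.range k, C (ell k j) * shiftedLegendrePoly j :=
      Finset.sum_congr rfl fun j hj => by rw [ell_add_two_of_le (Finset.mem_range.1 hj).le]
    rw [derivative_shiftedLegendrePoly_add_two, derivative_shiftedLegendrePoly k,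
      Finset.sum_range_succ, Finset.sum_range_succ, hlow, ell_add_two_self_add_one,
      ell_add_two_of_le le_rfl, show ell k k = 0 by simp [ell], map_zero, zero_mul, add_zero,
      add_comm]

end ShiftedLegendrePoly

section HeatEquation

open Set Filter MeasureTheory intervalIntegral

theorem intervalIntegral.hasDerivAt_integral_of_continuous_deriv {E : Type*}
    [NormedAddCommGroup E] [NormedSpace ℝ E] {F F' : ℝ → ℝ → E} {a b t : ℝ}
    (hF : ∀ s x, HasDerivAt (fun s => F s x) (F' s x) s) (hFc : ∀ s, Continuous (F s))
    (hF'c : Continuous (Function.uncurry F')) :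
    HasDerivAt (fun s => ∫ x in a..b, F s x) (∫ x in a..b, F' t x) t := by
  obtain ⟨M, hM⟩ := ((isCompact_closedBall t 1).prod isCompact_uIcc).exists_bound_of_continuousOn
    hF'c.continuousOn
  exact (hasDerivAt_integral_of_dominated_loc_of_deriv_le (bound := fun _ => M)
    (Metric.ball_mem_nhds t one_pos) (Eventually.of_forall fun s => (hFc s).aestronglyMeasurable)
    ((hFc t).intervalIntegrable _ _)
    (hF'c.comp (Continuous.prodMk_right t)).aestronglyMeasurable
    (ae_of_all _ fun x hx s hs =>
      hM (s, x) ⟨Metric.ball_subset_closedBall hs, uIoc_subset_uIcc hx⟩)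
    intervalIntegrable_const (ae_of_all _ fun x _ s _ => hF s x)).2

theorem intervalIntegral.integral_deriv_deriv_mul_eq {a b : ℝ} {f f' f'' g g' g'' : ℝ → ℝ}
    (hf : ∀ x ∈ uIcc a b, HasDerivAt f (f' x) x) (hf' : ∀ x ∈ uIcc a b, HasDerivAt f' (f'' x) x)
    (hg : ∀ x ∈ uIcc a b, HasDerivAt g (g' x) x) (hg' : ∀ x ∈ uIcc a b, HasDerivAt g' (g'' x) x)
    (hf'i : IntervalIntegrable f' volume a b) (hf''i : IntervalIntegrable f'' volume a b)
    (hg'i : IntervalIntegrable g' volume a b) (hg''i : IntervalIntegrable g'' volume a b) :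
    ∫ x in a..b, f'' x * g x
      = f' b * g b - f' a * g a - (f b * g' b - f a * g' a) + ∫ x in a..b, f x * g'' x := by
  have hg_f'' := integral_mul_deriv_eq_deriv_mul hg hf' hg'i hf''i
  have hf_g'' := integral_mul_deriv_eq_deriv_mul hf hg' hf'i hg''i
  simp only [mul_comm (g _), mul_comm (g' _)] at hg_f'' hf_g'' ⊢
  linarith

theorem hasDerivAt_integral_mul_of_heat {γ a b t : ℝ} (hab : a < b) {u ut ux uxx : ℝ → ℝ → ℝ}
    {φ φ' φ'' : ℝ → ℝ}
    (hut : ∀ x s, HasDerivAt (fun s => u x s) (ut x s) s)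
    (hutc : Continuous fun p : ℝ × ℝ => ut p.1 p.2) (hu : ∀ s, Continuous fun x => u x s)
    (hux : ∀ x, HasDerivAt (fun y => u y t) (ux x t) x)
    (huxx : ∀ x, HasDerivAt (fun y => ux y t) (uxx x t) x) (huxxc : Continuous fun x => uxx x t)
    (hheat : ∀ x ∈ Ioo a b, ut x t = γ * uxx x t)
    (hφ : ∀ x, HasDerivAt φ (φ' x) x) (hφ' : ∀ x, HasDerivAt φ' (φ'' x) x)
    (hφ'' : Continuous φ'') :
    HasDerivAt (fun s => ∫ x in a..b, u x s * φ x)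
      (γ * (ux b t * φ b - ux a t * φ a - (u b t * φ' b - u a t * φ' a)
        + ∫ x in a..b, u x t * φ'' x)) t := by
  have hφc : Continuous φ := continuous_iff_continuousAt.2 fun x => (hφ x).continuousAt
  have hφ'c : Continuous φ' := continuous_iff_continuousAt.2 fun x => (hφ' x).continuousAt
  have huxc : Continuous fun x => ux x t :=
    continuous_iff_continuousAt.2 fun x => (huxx x).continuousAt
  have hutc_t : Continuous fun x => ut x t := hutc.comp (Continuous.prodMk_left t)
  have hheat_Icc : EqOn (fun x => ut x t) (fun x => γ * uxx x t) (Icc a b) := by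
    rw [← closure_Ioo hab.ne]
    exact EqOn.closure hheat hutc_t (continuous_const.mul huxxc)
  have hderiv := hasDerivAt_integral_of_continuous_deriv (a := a) (b := b) (t := t)
    (F := fun s x => u x s * φ x) (F' := fun s x => ut x s * φ x)
    (fun s x => (hut x s).mul_const (φ x)) (fun s => (hu s).mul hφc)
    ((hutc.comp continuous_swap).mul (hφc.comp continuous_snd))
  have hgreen := integral_deriv_deriv_mul_eq (a := a) (b := b) (fun x _ => hux x)
    (fun x _ => huxx x) (fun x _ => hφ x) (fun x _ => hφ' x) (huxc.intervalIntegrable _ _)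
    (huxxc.intervalIntegrable _ _) (hφ'c.intervalIntegrable _ _) (hφ''.intervalIntegrable _ _)
  refine hderiv.congr_deriv ?_
  rw [← hgreen, ← intervalIntegral.integral_const_mul]
  refine integral_congr fun x hx => ?_
  simp only [hheat_Icc (uIcc_of_le hab.le ▸ hx)]
  ring

end HeatEquation

section LegendreCoefficients

open Polynomial

theorem intervalIntegral.integral_mul_eval_sum {ι : Type*} (s : Finset ι) {g : ℝ → ℝ}
    (hg : Continuous g) (c : ι → ℝ) (p : ι → ℝ[X]) (a b : ℝ) :
    ∫ x in a..b, g x * (∑ j ∈ s, C (c j) * p j).eval x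
      = ∑ j ∈ s, c j * ∫ x in a..b, g x * (p j).eval x := by
  simp only [eval_finsetSum, eval_mul, eval_C, Finset.mul_sum, mul_left_comm (g _)]
  rw [intervalIntegral.integral_finsetSum fun j _ =>
    (by fun_prop : Continuous _).intervalIntegrable _ _]
  simp only [intervalIntegral.integral_const_mul]

theorem integral_mul_derivative_shiftedLegendrePoly {g : ℝ → ℝ} (hg : Continuous g) (k : ℕ)
    (a b : ℝ) :
    ∫ x in a..b, g x * (derivative (shiftedLegendrePoly k)).eval x
      = ∑ j ∈ Finset.range k, ell k j * ∫ x in a..b, g x * (shiftedLegendrePoly j).eval x := by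
  rw [derivative_shiftedLegendrePoly, intervalIntegral.integral_mul_eval_sum _ hg]

theorem integral_mul_derivative_derivative_shiftedLegendrePoly {g : ℝ → ℝ} (hg : Continuous g)
    (k : ℕ) (a b : ℝ) :
    ∫ x in a..b, g x * (derivative (derivative (shiftedLegendrePoly k))).eval x
      = ∑ j ∈ Finset.range k, ∑ i ∈ Finset.range j,
          ell k j * ell j i * ∫ x in a..b, g x * (shiftedLegendrePoly i).eval x := by
  rw [derivative_shiftedLegendrePoly, derivative_sum]
  simp only [derivative_C_mul]
  rw [intervalIntegral.integral_mul_eval_sum _ hg]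
  simp only [integral_mul_derivative_shiftedLegendrePoly hg, Finset.mul_sum, mul_assoc]

theorem hasDerivAt_integral_mul_shiftedLegendre {γ t : ℝ} {u ut ux uxx : ℝ → ℝ → ℝ}
    (hut : ∀ x s, HasDerivAt (fun s => u x s) (ut x s) s)
    (hutc : Continuous fun p : ℝ × ℝ => ut p.1 p.2)
    (hux : ∀ x s, HasDerivAt (fun y => u y s) (ux x s) x)
    (huxx : ∀ x, HasDerivAt (fun y => ux y t) (uxx x t) x) (huxxc : Continuous fun x => uxx x t)
    (hheat : ∀ x ∈ Set.Ioo (0 : ℝ) 1, ut x t = γ * uxx x t) (hneu : ux 1 t = 0) (k : ℕ) :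
    HasDerivAt (fun s => ∫ x in (0 : ℝ)..1, u x s * shiftedLegendre k x)
      (γ * ((∑ j ∈ Finset.Ico 1 k, ∑ i ∈ Finset.range j,
            ell k j * ell j i * ∫ x in (0 : ℝ)..1, u x t * shiftedLegendre i x)
          + u 0 t * (∑ j ∈ Finset.range k, ell k j * (-1 : ℝ) ^ j)
          - u 1 t * (∑ j ∈ Finset.range k, ell k j)
          - (-1 : ℝ) ^ k * ux 0 t)) t := by
  have hu (s : ℝ) : Continuous fun x => u x s :=
    continuous_iff_continuousAt.2 fun x => (hux x s).continuousAt
  set P := shiftedLegendrePoly k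
  have h := hasDerivAt_integral_mul_of_heat zero_lt_one hut hutc hu (fun x => hux x t) huxx
    huxxc hheat (fun x => P.hasDerivAt x) (fun x => (derivative P).hasDerivAt x)
    (derivative (derivative P)).continuous_aeval
  simp only [shiftedLegendre_eq_eval]
  refine h.congr_deriv (congrArg _ ?_)
  have hIco : ∑ j ∈ Finset.range k, ∑ i ∈ Finset.range j,
        ell k j * ell j i * ∫ x in (0 : ℝ)..1, u x t * (shiftedLegendrePoly i).eval x
      = ∑ j ∈ Finset.Ico 1 k, ∑ i ∈ Finset.range j,
        ell k j * ell j i * ∫ x in (0 : ℝ)..1, u x t * (shiftedLegendrePoly i).eval x := by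
    rcases k.eq_zero_or_pos with rfl | hk
    · rfl
    · rw [Finset.sum_range_eq_add_Ico _ hk, Finset.range_zero, Finset.sum_empty, zero_add]
  rw [integral_mul_derivative_derivative_shiftedLegendrePoly (hu t), hIco, hneu]
  simp only [P, derivative_shiftedLegendrePoly, eval_finsetSum, eval_mul, eval_C,
    shiftedLegendrePoly_eval_one, shiftedLegendrePoly_eval_zero, mul_one, zero_sub]
  ring

end LegendreCoefficients

theorem legendre_coeff_time_deriv_general (γ : ℝ) (hγ : 0 < γ)
    (u ut ux uxx : ℝ → ℝ → ℝ)
    (hut : ∀ x t, HasDerivAt (fun s => u x s) (ut x t) t)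
    (hux : ∀ x t, HasDerivAt (fun y => u y t) (ux x t) x)
    (huxx : ∀ x t, HasDerivAt (fun y => ux y t) (uxx x t) x)
    (hutc : Continuous fun p : ℝ × ℝ => ut p.1 p.2)
    (huxxc : Continuous fun p : ℝ × ℝ => uxx p.1 p.2)
    (hheat : ∀ t > (0:ℝ), ∀ x ∈ Set.Ioo (0:ℝ) 1, ut x t = γ * uxx x t)
    (hneu : ∀ t > (0:ℝ), ux 1 t = 0)
    (t : ℝ) (ht : 0 < t) :
    ((1 / γ) * deriv (fun s => ∫ x in (0:ℝ)..1, u x s * shiftedLegendre 0 x) t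
        = -(ux 0 t)) ∧
    ((1 / γ) * deriv (fun s => ∫ x in (0:ℝ)..1, u x s * shiftedLegendre 1 x) t
        = 2 * u 0 t - 2 * u 1 t + ux 0 t) ∧
    (∀ k : ℕ, 2 ≤ k →
      (1 / γ) * deriv (fun s => ∫ x in (0:ℝ)..1, u x s * shiftedLegendre k x) t
        = (∑ j ∈ Finset.Ico 1 k, ∑ i ∈ Finset.range j,
            ell k j * ell j i * ∫ x in (0:ℝ)..1, u x t * shiftedLegendre i x)
          + u 0 t * (∑ j ∈ Finset.range k, ell k j * (-1 : ℝ) ^ j)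
          - u 1 t * (∑ j ∈ Finset.range k, ell k j)
          - (-1 : ℝ) ^ k * ux 0 t) := by
  have hcoeff (k : ℕ) := (hasDerivAt_integral_mul_shiftedLegendre hut hutc hux (huxx · t)
    (huxxc.comp (Continuous.prodMk_left t)) (hheat t ht) (hneu t ht) k).deriv
  simp only [hcoeff, one_div, inv_mul_cancel_left₀ hγ.ne', implies_true, and_true]
  exact ⟨by simp, by simp [ell]; ring⟩

/-- time derivative of the Legendre coefficients: for a solution `u(x,t)`
of the heat equation `∂ₜu = γ ∂ₓₓu` on `(0,1)` with `∂ₓu(1,t) = 0` (with continuous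
partial derivatives `∂ₜu`, `∂ₓu`, `∂ₓₓu`), for every `t > 0`:
`(1/γ) d/dt ⟨u(·,t), L_0⟩ = −∂ₓu(0,t)`,
`(1/γ) d/dt ⟨u(·,t), L_1⟩ = 2u(0,t) − 2u(1,t) + ∂ₓu(0,t)`, and for `k ≥ 2`,
`(1/γ) d/dt ⟨u(·,t), L_k⟩ = Σ_{j=1}^{k−1} Σ_{i=0}^{j−1} ℓ_{kj} ℓ_{ji} ⟨u(·,t), L_i⟩
  + u(0,t) Σ_{j<k} ℓ_{kj}(−1)^j − u(1,t) Σ_{j<k} ℓ_{kj} − (−1)^k ∂ₓu(0,t)`. -/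
theorem legendre_coeff_time_deriv (γ : ℝ) (hγ : 0 < γ)
    (u ut ux uxx : ℝ → ℝ → ℝ)
    (hut : ∀ x t, HasDerivAt (fun s => u x s) (ut x t) t)
    (hux : ∀ x t, HasDerivAt (fun y => u y t) (ux x t) x)
    (huxx : ∀ x t, HasDerivAt (fun y => ux y t) (uxx x t) x)
    (hutc : Continuous fun p : ℝ × ℝ => ut p.1 p.2)
    (huxc : Continuous fun p : ℝ × ℝ => ux p.1 p.2)
    (huxxc : Continuous fun p : ℝ × ℝ => uxx p.1 p.2)
    (hheat : ∀ t > (0:ℝ), ∀ x ∈ Set.Ioo (0:ℝ) 1, ut x t = γ * uxx x t)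
    (hneu : ∀ t > (0:ℝ), ux 1 t = 0)
    (t : ℝ) (ht : 0 < t) :
    ((1 / γ) * deriv (fun s => ∫ x in (0:ℝ)..1, u x s * shiftedLegendre 0 x) t
        = -(ux 0 t)) ∧
    ((1 / γ) * deriv (fun s => ∫ x in (0:ℝ)..1, u x s * shiftedLegendre 1 x) t
        = 2 * u 0 t - 2 * u 1 t + ux 0 t) ∧
    (∀ k : ℕ, 2 ≤ k →
      (1 / γ) * deriv (fun s => ∫ x in (0:ℝ)..1, u x s * shiftedLegendre k x) t
        = (∑ j ∈ Finset.Ico 1 k, ∑ i ∈ Finset.range j,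
            ell k j * ell j i * ∫ x in (0:ℝ)..1, u x t * shiftedLegendre i x)
          + u 0 t * (∑ j ∈ Finset.range k, ell k j * (-1 : ℝ) ^ j)
          - u 1 t * (∑ j ∈ Finset.range k, ell k j)
          - (-1 : ℝ) ^ k * ux 0 t) :=
  legendre_coeff_time_deriv_general γ hγ u ut ux uxx hut hux huxx hutc huxxc hheat hneu t ht
end

section
/- (Energy derivative identity) Let (X,u) be a classical solution of the coupled ODE–heat system (with in addition ∂ₜₓu continuous), and define E(t) = |X(t)|² + ∫₀¹ u(x,t)² dx + ∫₀¹ (∂ₓu(x,t))² dx. Then for all t > 0, Ė(t) = X(t)ᵀ(Aᵀ + A)X(t) + 2 u(1,t) BᵀX(t) − 2γ ∫₀¹ (∂ₓu(x,t))² dx − 2 ∂ₓu(0,t)(γC + CA)X(t) − 2 ∂ₓu(0,t) C B u(1,t) − 2γ ∫₀¹ (∂ₓₓu(x,t))² dx. -/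
/-!
Differentiate the three parts of the energy under the integral sign, then substitute the ODE
and the heat equation `∂ₜu = γ ∂ₓₓu`. Integrating `u ∂ₓₓu` and `∂ₓu ∂ₓ∂ₜu` by parts produces the
dissipation terms `-γ ∫ (∂ₓu)²` and `-γ ∫ (∂ₓₓu)²`; of the boundary terms, those at `x = 1` vanish
by the Neumann condition, and those at `x = 0` are expressed through `X` by the Dirichlet condition
`u(0,t) = C X(t)` and its time derivative `∂ₜu(0,t) = C (A X + B u(1,t))`.
The identity `∂ₓ∂ₜu = ∂ₜ∂ₓu` follows by differentiating `u(y,t) - u(0,t) = ∫₀^y ∂ₓu(z,t) dz`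
in `t`, which writes `∂ₜu(·,t)` as a primitive of `∂ₜ∂ₓu(·,t)`.
-/

open Matrix MeasureTheory Set Filter Function

section PartialDerivatives

variable {f f' fx fxs : ℝ → ℝ → ℝ}

theorem hasDerivAt_intervalIntegral_of_continuous
    (hf : ∀ x s, HasDerivAt (f x) (f' x s) s)
    (hfc : Continuous (uncurry f)) (hf'c : Continuous (uncurry f')) (a b t : ℝ) :
    HasDerivAt (fun s => ∫ x in a..b, f x s) (∫ x in a..b, f' x t) t := by
  obtain ⟨M, hM⟩ := (isCompact_uIcc.prod (isCompact_Icc (a := t - 1) (b := t + 1))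
    ).exists_bound_of_continuousOn hf'c.continuousOn
  refine (intervalIntegral.hasDerivAt_integral_of_dominated_loc_of_deriv_le
    (F := fun s x => f x s) (F' := fun s x => f' x s) (bound := fun _ => M)
    (Metric.ball_mem_nhds t zero_lt_one) ?_ ?_ ?_ ?_ intervalIntegrable_const
    (.of_forall fun x _ s _ => hf x s)).2
  · exact .of_forall fun s => (hfc.comp (.prodMk_left s)).aestronglyMeasurable
  · exact (hfc.comp (.prodMk_left t)).intervalIntegrable a b
  · exact (hf'c.comp (.prodMk_left t)).aestronglyMeasurable
  · refine .of_forall fun x hx s hs => hM (x, s) ⟨uIoc_subset_uIcc hx, ?_⟩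
    rw [Metric.mem_ball, Real.dist_eq, abs_lt] at hs
    constructor <;> linarith

theorem continuous_uncurry_of_hasDerivAt_snd (hf : ∀ x s, HasDerivAt (f x) (f' x s) s)
    (hf'c : Continuous (uncurry f')) (hf0 : Continuous fun x => f x 0) :
    Continuous (uncurry f) := by
  have hprim : uncurry f = fun p => f p.1 0 + ∫ s in (0 : ℝ)..p.2, f' p.1 s := by
    ext ⟨x, t⟩
    rw [intervalIntegral.integral_eq_sub_of_hasDerivAt (fun s _ => hf x s)
      ((hf'c.comp (.prodMk_right x)).intervalIntegrable 0 t)]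
    simp
  rw [hprim]
  exact (hf0.comp continuous_fst).add
    (intervalIntegral.continuous_parametric_primitive_of_continuous hf'c)

theorem hasDerivAt_of_mixed_partial (hft : ∀ x s, HasDerivAt (f x) (f' x s) s)
    (hfx : ∀ x s, HasDerivAt (f · s) (fx x s) x) (hfxs : ∀ x s, HasDerivAt (fx x) (fxs x s) s)
    (hfxc : Continuous (uncurry fx)) (hfxsc : Continuous (uncurry fxs)) (x t : ℝ) :
    HasDerivAt (f' · t) (fxs x t) x := by
  have hprim : ∀ y, f' y t = f' 0 t + ∫ z in (0 : ℝ)..y, fxs z t := by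
    intro y
    have hdiff : ∀ s, f y s - f 0 s = ∫ z in (0 : ℝ)..y, fx z s := fun s =>
      (intervalIntegral.integral_eq_sub_of_hasDerivAt (fun z _ => hfx z s)
        ((hfxc.comp (.prodMk_left s)).intervalIntegrable 0 y)).symm
    have := ((hft y t).sub (hft 0 t)).unique <|
      (hasDerivAt_intervalIntegral_of_continuous hfxs hfxc hfxsc 0 y t).congr_of_eventuallyEq
        (.of_forall hdiff)
    linarith
  rw [show (f' · t) = _ from funext hprim]
  exact ((hfxsc.comp (.prodMk_left t)).integral_hasStrictDerivAt 0 x).hasDerivAt.const_add _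

theorem hasDerivAt_intervalIntegral_sq (hf : ∀ x s, HasDerivAt (f x) (f' x s) s)
    (hfc : Continuous (uncurry f)) (hf'c : Continuous (uncurry f')) (a b t : ℝ) :
    HasDerivAt (fun s => ∫ x in a..b, f x s ^ 2) (2 * ∫ x in a..b, f x t * f' x t) t := by
  rw [← intervalIntegral.integral_const_mul]
  refine hasDerivAt_intervalIntegral_of_continuous (f := fun x s => f x s ^ 2)
    (f' := fun x s => 2 * (f x s * f' x s)) (fun x s => ?_) (hfc.fun_pow 2)
    (continuous_const.fun_mul (hfc.fun_mul hf'c)) a b t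
  exact ((hf x s).fun_pow 2).congr_deriv (by push_cast; ring)

end PartialDerivatives

section HeatEquation

variable {γ a b : ℝ} {v vx vxx vt vtx : ℝ → ℝ}

theorem integral_mul_of_heat (hv : ∀ x, HasDerivAt v (vx x) x)
    (hvx : ∀ x, HasDerivAt vx (vxx x) x) (hvxc : Continuous vx) (hvxxc : Continuous vxx)
    (hheat : EqOn vt (fun x => γ * vxx x) (uIcc a b)) :
    ∫ x in a..b, v x * vt x = γ * (v b * vx b - v a * vx a - ∫ x in a..b, vx x ^ 2) := by
  rw [intervalIntegral.integral_congr (g := fun x => γ * (v x * vxx x))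
      fun x hx => by simp only [hheat hx]; ring,
    intervalIntegral.integral_const_mul, intervalIntegral.integral_mul_deriv_eq_deriv_mul
      (fun x _ => hv x) (fun x _ => hvx x) (hvxc.intervalIntegrable a b)
      (hvxxc.intervalIntegrable a b)]
  simp only [sq]

theorem integral_deriv_mul_of_heat (hvx : ∀ x, HasDerivAt vx (vxx x) x)
    (hvt : ∀ x, HasDerivAt vt (vtx x) x) (hvxxc : Continuous vxx) (hvtxc : Continuous vtx)
    (hheat : EqOn vt (fun x => γ * vxx x) (uIcc a b)) :
    ∫ x in a..b, vx x * vtx x = vx b * vt b - vx a * vt a - γ * ∫ x in a..b, vxx x ^ 2 := by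
  rw [intervalIntegral.integral_mul_deriv_eq_deriv_mul (fun x _ => hvx x) (fun x _ => hvt x)
      (hvxxc.intervalIntegrable a b) (hvtxc.intervalIntegrable a b),
    intervalIntegral.integral_congr (g := fun x => γ * vxx x ^ 2)
      fun x hx => by simp only [hheat hx]; ring,
    intervalIntegral.integral_const_mul]

end HeatEquation

section LinearAlgebra

variable {ι κ μ : Type*} [Fintype ι]

theorem HasDerivAt.mulVec {φ : ℝ → ι → ℝ} {φ' : ι → ℝ} {t : ℝ} (M : Matrix κ ι ℝ)
    (h : HasDerivAt φ φ' t) : HasDerivAt (fun s => M *ᵥ φ s) (M *ᵥ φ') t :=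
  hasDerivAt_pi.2 fun _ => HasDerivAt.fun_sum fun j _ => (hasDerivAt_pi.1 h j).const_mul _

theorem hasDerivAt_sum_sq {φ : ℝ → ι → ℝ} {φ' : ι → ℝ} {t : ℝ} (h : HasDerivAt φ φ' t) :
    HasDerivAt (fun s => ∑ i, φ s i ^ 2) (2 * (φ t ⬝ᵥ φ')) t := by
  rw [dotProduct, Finset.mul_sum]
  exact HasDerivAt.fun_sum fun i _ =>
    ((hasDerivAt_pi.1 h i).fun_pow 2).congr_deriv (by push_cast; ring)

variable {R : Type*} [CommRing R]

theorem two_mul_dotProduct_mulVec_add (A : Matrix ι ι R) (x b : ι → R) (w : R) :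
    2 * (x ⬝ᵥ (A *ᵥ x + fun i => b i * w)) = x ⬝ᵥ (Aᵀ + A) *ᵥ x + 2 * w * ∑ i, b i * x i := by
  have hT : x ⬝ᵥ Aᵀ *ᵥ x = x ⬝ᵥ A *ᵥ x := by
    rw [dotProduct_mulVec, vecMul_transpose, dotProduct_comm]
  have hb : (x ⬝ᵥ fun i => b i * w) = w * ∑ i, b i * x i := by
    rw [dotProduct, Finset.mul_sum]
    exact Finset.sum_congr rfl fun i _ => by ring
  rw [add_mulVec, dotProduct_add, dotProduct_add, hT, hb]
  ring

theorem mulVec_mulVec_add_col_apply (A : Matrix ι ι R) (B : Matrix ι κ R) (C : Matrix μ ι R)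
    (x : ι → R) (w : R) (k : μ) (l : κ) :
    (C *ᵥ (A *ᵥ x + fun i => B i l * w)) k = ((C * A) *ᵥ x) k + (C * B) k l * w := by
  rw [mulVec_add, Pi.add_apply, mulVec_mulVec]
  simp only [mulVec, dotProduct, mul_apply, Finset.sum_mul, mul_assoc]

end LinearAlgebra

theorem energy_derivative_general {n : ℕ} (A : Matrix (Fin n) (Fin n) ℝ)
    (B : Matrix (Fin n) (Fin 1) ℝ) (C : Matrix (Fin 1) (Fin n) ℝ)
    (γ : ℝ)
    (X : ℝ → Fin n → ℝ) (u ut ux uxx utx : ℝ → ℝ → ℝ)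
    (hODE : ∀ t > (0:ℝ), HasDerivAt X (A.mulVec (X t) + fun i => B i 0 * u 1 t) t)
    (hut : ∀ x t, HasDerivAt (fun s => u x s) (ut x t) t)
    (hux : ∀ x t, HasDerivAt (fun y => u y t) (ux x t) x)
    (huxx : ∀ x t, HasDerivAt (fun y => ux y t) (uxx x t) x)
    (hutx : ∀ x t, HasDerivAt (fun s => ux x s) (utx x t) t)
    (hutc : Continuous fun p : ℝ × ℝ => ut p.1 p.2)
    (huxc : Continuous fun p : ℝ × ℝ => ux p.1 p.2)
    (huxxc : Continuous fun p : ℝ × ℝ => uxx p.1 p.2)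
    (hutxc : Continuous fun p : ℝ × ℝ => utx p.1 p.2)
    (hheat : ∀ t > (0:ℝ), ∀ x ∈ Set.Ioo (0:ℝ) 1, ut x t = γ * uxx x t)
    (hdir : ∀ t > (0:ℝ), u 0 t = C.mulVec (X t) 0)
    (hneu : ∀ t > (0:ℝ), ux 1 t = 0)
    (t : ℝ) (ht : 0 < t) :
    deriv (fun s => (∑ i, (X s i) ^ 2) + (∫ x in (0:ℝ)..1, (u x s) ^ 2)
        + ∫ x in (0:ℝ)..1, (ux x s) ^ 2) t
      = X t ⬝ᵥ (Aᵀ + A).mulVec (X t)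
        + 2 * u 1 t * (∑ i, B i 0 * X t i)
        - 2 * γ * (∫ x in (0:ℝ)..1, (ux x t) ^ 2)
        - 2 * ux 0 t * (∑ j, (γ * C 0 j + (C * A) 0 j) * X t j)
        - 2 * ux 0 t * ((C * B) 0 0) * u 1 t
        - 2 * γ * ∫ x in (0:ℝ)..1, (uxx x t) ^ 2 := by
  have huc : Continuous fun p : ℝ × ℝ => u p.1 p.2 := continuous_uncurry_of_hasDerivAt_snd hut
    hutc (continuous_iff_continuousAt.2 fun x => (hux x 0).continuousAt)
  have hE := ((hasDerivAt_sum_sq (hODE t ht)).fun_add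
    (hasDerivAt_intervalIntegral_sq hut huc hutc 0 1 t)).fun_add
    (hasDerivAt_intervalIntegral_sq hutx huxc hutxc 0 1 t)
  have hheatIcc : EqOn (ut · t) (fun x => γ * uxx x t) (uIcc 0 1) := by
    rw [uIcc_of_le zero_le_one, ← closure_Ioo zero_ne_one]
    exact EqOn.closure (hheat t ht) (hutc.comp (.prodMk_left t))
      (continuous_const.mul (huxxc.comp (.prodMk_left t)))
  have hut0 : ut 0 t = (C *ᵥ (A *ᵥ X t + fun i => B i 0 * u 1 t)) 0 :=
    (hut 0 t).unique <| (hasDerivAt_pi.1 ((hODE t ht).mulVec C) 0).congr_of_eventuallyEq <|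
      eventually_gt_nhds ht |>.mono fun s hs => hdir s hs
  rw [hE.deriv, integral_mul_of_heat (hux · t) (huxx · t) (huxc.comp (.prodMk_left t))
      (huxxc.comp (.prodMk_left t)) hheatIcc,
    integral_deriv_mul_of_heat (huxx · t) (hasDerivAt_of_mixed_partial hut hux hutx huxc hutxc · t)
      (huxxc.comp (.prodMk_left t)) (hutxc.comp (.prodMk_left t)) hheatIcc,
    hneu t ht, hdir t ht, hut0, two_mul_dotProduct_mulVec_add, mulVec_mulVec_add_col_apply]
  have hCX : ∑ j, (γ * C 0 j + (C * A) 0 j) * X t j = γ * (C *ᵥ X t) 0 + ((C * A) *ᵥ X t) 0 := by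
    simp only [mulVec, dotProduct, add_mul, Finset.sum_add_distrib, Finset.mul_sum, mul_assoc]
  rw [hCX]
  ring

/-- energy derivative identity: along a classical solution `(X,u)` of the
coupled ODE–heat system (with `∂ₜₓu` continuous), the energy
`E(t) = |X(t)|² + ∫₀¹ u² + ∫₀¹ (∂ₓu)²` satisfies
`Ė = Xᵀ(Aᵀ+A)X + 2u(1)BᵀX − 2γ‖∂ₓu‖² − 2∂ₓu(0)(γC+CA)X − 2∂ₓu(0)CBu(1) − 2γ‖∂ₓₓu‖²`. -/
theorem energy_derivative {n : ℕ} (A : Matrix (Fin n) (Fin n) ℝ)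
    (B : Matrix (Fin n) (Fin 1) ℝ) (C : Matrix (Fin 1) (Fin n) ℝ)
    (γ : ℝ) (hγ : 0 < γ)
    (X : ℝ → Fin n → ℝ) (u ut ux uxx utx : ℝ → ℝ → ℝ)
    (hX : ContDiff ℝ 1 X)
    (hODE : ∀ t > (0:ℝ), HasDerivAt X (A.mulVec (X t) + fun i => B i 0 * u 1 t) t)
    (hut : ∀ x t, HasDerivAt (fun s => u x s) (ut x t) t)
    (hux : ∀ x t, HasDerivAt (fun y => u y t) (ux x t) x)
    (huxx : ∀ x t, HasDerivAt (fun y => ux y t) (uxx x t) x)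
    (hutx : ∀ x t, HasDerivAt (fun s => ux x s) (utx x t) t)
    (hutc : Continuous fun p : ℝ × ℝ => ut p.1 p.2)
    (huxc : Continuous fun p : ℝ × ℝ => ux p.1 p.2)
    (huxxc : Continuous fun p : ℝ × ℝ => uxx p.1 p.2)
    (hutxc : Continuous fun p : ℝ × ℝ => utx p.1 p.2)
    (hheat : ∀ t > (0:ℝ), ∀ x ∈ Set.Ioo (0:ℝ) 1, ut x t = γ * uxx x t)
    (hdir : ∀ t > (0:ℝ), u 0 t = C.mulVec (X t) 0)
    (hneu : ∀ t > (0:ℝ), ux 1 t = 0)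
    (t : ℝ) (ht : 0 < t) :
    deriv (fun s => (∑ i, (X s i) ^ 2) + (∫ x in (0:ℝ)..1, (u x s) ^ 2)
        + ∫ x in (0:ℝ)..1, (ux x s) ^ 2) t
      = X t ⬝ᵥ (Aᵀ + A).mulVec (X t)
        + 2 * u 1 t * (∑ i, B i 0 * X t i)
        - 2 * γ * (∫ x in (0:ℝ)..1, (ux x t) ^ 2)
        - 2 * ux 0 t * (∑ j, (γ * C 0 j + (C * A) 0 j) * X t j)
        - 2 * ux 0 t * ((C * B) 0 0) * u 1 t
        - 2 * γ * ∫ x in (0:ℝ)..1, (uxx x t) ^ 2 :=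
  energy_derivative_general A B C γ X u ut ux uxx utx hODE hut hux huxx hutx hutc huxc huxxc hutxc
    hheat hdir hneu t ht
end

section
/- (Bessel bound for the spatial derivative in projected coordinates) Let u : [0,1] → ℝ be continuously differentiable and N ∈ ℕ. Then ∫₀¹ (u'(x))² dx ≥ Σ_{k=0}^{N+1} (2k+1) · ( u(1) − (−1)^k u(0) − Σ_{j=0}^{k−1} ℓ_{kj} ⟨u, L_j⟩ )². -/
/-!
Integrating by parts, `⟨u', L_k⟩ = u(1) L_k(1) - u(0) L_k(0) - ⟨u, L_k'⟩`, and
`L_k(1) = 1`, `L_k(0) = (-1)ᵏ`. The derivative `L_k'` has degree `< k`, so it expands in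
`L_0, …, L_{k-1}`; pairing with `L_j` and integrating by parts once more shows that the
coefficients are exactly the `ℓ_{kj}`. Hence the `k`-th term of the sum is
`(2k+1) ⟨u', L_k⟩²`. By Rodrigues' formula and repeated integration by parts the functions
`√(2k+1) L_k` are orthonormal in `L²(0,1)`, so the inequality is Bessel's inequality for `u'`.
-/

open MeasureTheory Set
open scoped Nat Polynomial

theorem MeasureTheory.MemLp.inner_toLp_eq_intervalIntegral {a b : ℝ} (hab : a ≤ b)
    {f g : ℝ → ℝ} (hf : MemLp f 2 (volume.restrict (Ioc a b)))
    (hg : MemLp g 2 (volume.restrict (Ioc a b))) :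
    inner ℝ (hf.toLp f) (hg.toLp g) = ∫ x in a..b, f x * g x := by
  rw [L2.inner_def, intervalIntegral.integral_of_le hab]
  refine integral_congr_ae ?_
  filter_upwards [hf.coeFn_toLp, hg.coeFn_toLp] with x hfx hgx
  rw [hfx, hgx, real_inner_eq_re_inner]
  simp [mul_comm]

theorem sum_sq_integral_mul_le_integral_sq {ι : Type*} [DecidableEq ι] {a b : ℝ} (hab : a ≤ b)
    {e : ι → ℝ → ℝ} (he : ∀ i, Continuous (e i))
    (hee : ∀ i j, ∫ x in a..b, e i x * e j x = if i = j then 1 else 0)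
    {g : ℝ → ℝ} (hg : Continuous g) (s : Finset ι) :
    ∑ i ∈ s, (∫ x in a..b, e i x * g x) ^ 2 ≤ ∫ x in a..b, g x ^ 2 := by
  have memLp {f : ℝ → ℝ} (hf : Continuous f) : MemLp f 2 (volume.restrict (Ioc a b)) :=
    (memLp_two_iff_integrable_sq hf.aestronglyMeasurable).2
      ((hf.pow 2).integrableOn_Icc.mono_set Ioc_subset_Icc_self)
  have hv : Orthonormal ℝ fun i => (memLp (he i)).toLp (e i) :=
    orthonormal_iff_ite.2 fun i j => (MemLp.inner_toLp_eq_intervalIntegral hab _ _).trans (hee i j)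
  have bessel := hv.sum_inner_products_le ((memLp hg).toLp g) (s := s)
  rw [← real_inner_self_eq_norm_sq, MemLp.inner_toLp_eq_intervalIntegral hab] at bessel
  simpa [MemLp.inner_toLp_eq_intervalIntegral hab, sq] using bessel

theorem integral_pow_mul_one_sub_pow (a b : ℕ) :
    ∫ x in (0 : ℝ)..1, x ^ a * (1 - x) ^ b = a ! * b ! / (a + b + 1)! := by
  induction b generalizing a with
  | zero =>
    simp [integral_pow, Nat.factorial_succ, field]
  | succ b ih =>
    have key : ((a : ℝ) + 1) * ∫ x in (0 : ℝ)..1, x ^ a * (1 - x) ^ (b + 1) =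
        (b + 1) * ∫ x in (0 : ℝ)..1, x ^ (a + 1) * (1 - x) ^ b := by
      have h := intervalIntegral.integral_mul_deriv_eq_deriv_mul (a := 0) (b := 1)
        (u := fun x : ℝ => (1 - x) ^ (b + 1)) (v := fun x => x ^ (a + 1))
        (u' := fun x => -((b + 1 : ℝ) * (1 - x) ^ b)) (v' := fun x => (a + 1 : ℝ) * x ^ a)
        (fun x _ => by simpa using ((hasDerivAt_id x).const_sub 1).fun_pow (b + 1))
        (fun x _ => by simpa using hasDerivAt_pow (a + 1) x)
        ((by fun_prop : Continuous _).intervalIntegrable _ _)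
        ((by fun_prop : Continuous _).intervalIntegrable _ _)
      simp only [sub_self, zero_pow (Nat.succ_ne_zero _), one_pow, mul_one, mul_zero, sub_zero,
        neg_mul, intervalIntegral.integral_neg, sub_neg_eq_add, zero_add] at h
      rw [← intervalIntegral.integral_const_mul, ← intervalIntegral.integral_const_mul]
      convert h using 1 <;> congr 1 <;> ext x <;> ring
    rw [ih, show a + 1 + b + 1 = a + (b + 1) + 1 by ring] at key
    rw [eq_div_iff (by positivity)]
    apply mul_left_cancel₀ (by positivity : (a : ℝ) + 1 ≠ 0)
    rw [← mul_assoc, key]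
    push_cast [Nat.factorial_succ]
    field_simp

namespace Polynomial

theorem isRoot_iterate_derivative_pow {R : Type*} [CommRing R] {p : R[X]} {a : R}
    (ha : p.IsRoot a) {k m : ℕ} (hm : m < k) : (derivative^[m] (p ^ k)).IsRoot a := by
  obtain ⟨r, hr⟩ := pow_sub_dvd_iterate_derivative_pow p k m
  rw [IsRoot, hr, eval_mul, eval_pow, ha.eq_zero, zero_pow (by omega), zero_mul]

theorem iterate_derivative_natDegree {R : Type*} [Semiring R] (p : R[X]) :
    derivative^[p.natDegree] p = C (p.natDegree ! * p.leadingCoeff) := by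
  have h : (derivative^[p.natDegree] p).natDegree ≤ 0 := by
    simpa using natDegree_iterate_derivative p p.natDegree
  rw [eq_C_of_natDegree_le_zero h, coeff_iterate_derivative, zero_add, Nat.descFactorial_self,
    nsmul_eq_mul, leadingCoeff]

theorem iteratedDeriv_eval_s15 {𝕜 : Type*} [NontriviallyNormedField 𝕜] (p : 𝕜[X]) (n : ℕ) :
    iteratedDeriv n (fun x => p.eval x) = fun x => (derivative^[n] p).eval x := by
  induction n generalizing p with
  | zero => simp
  | succ n ih =>
    have hderiv : deriv (fun x => p.eval x) = fun x => (derivative p).eval x := by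
      ext x; exact p.deriv
    rw [iteratedDeriv_succ', hderiv, ih, Function.iterate_succ_apply]

theorem integral_eval_mul_eval_derivative (p q : ℝ[X]) (a b : ℝ) :
    ∫ x in a..b, p.eval x * (derivative q).eval x =
      p.eval b * q.eval b - p.eval a * q.eval a - ∫ x in a..b, (derivative p).eval x * q.eval x :=
  intervalIntegral.integral_mul_deriv_eq_deriv_mul (fun x _ => p.hasDerivAt x)
    (fun x _ => q.hasDerivAt x) ((derivative p).continuous.intervalIntegrable _ _)
    ((derivative q).continuous.intervalIntegrable _ _)

/-- The boundary terms vanish because `a` and `b` are roots of `derivative^[i] (p ^ k)` for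
every `i < k`. -/
theorem integral_eval_mul_eval_iterate_derivative_pow {p : ℝ[X]} {a b : ℝ} (ha : p.IsRoot a)
    (hb : p.IsRoot b) {k m : ℕ} (hm : m ≤ k) (q : ℝ[X]) :
    ∫ x in a..b, q.eval x * (derivative^[m] (p ^ k)).eval x =
      (-1) ^ m * ∫ x in a..b, (derivative^[m] q).eval x * (p ^ k).eval x := by
  induction m generalizing q with
  | zero => simp
  | succ m ih =>
    rw [Function.iterate_succ_apply', integral_eval_mul_eval_derivative,
      (isRoot_iterate_derivative_pow ha (by omega)).eq_zero,
      (isRoot_iterate_derivative_pow hb (by omega)).eq_zero, ih (by omega),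
      Function.iterate_succ_apply]
    ring

theorem integral_eval_X_sq_sub_X_pow (k : ℕ) :
    ∫ x in (0 : ℝ)..1, ((X ^ 2 - X : ℝ[X]) ^ k).eval x =
      (-1) ^ k * (k ! * k ! / (2 * k + 1)!) := by
  have h (x : ℝ) : ((X ^ 2 - X : ℝ[X]) ^ k).eval x = (-1) ^ k * (x ^ k * (1 - x) ^ k) := by
    rw [← mul_pow, ← mul_pow, eval_pow, eval_sub, eval_pow, eval_X]
    ring
  simp_rw [h, intervalIntegral.integral_const_mul, integral_pow_mul_one_sub_pow, two_mul]

end Polynomial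

section ShiftedLegendreReal

open Polynomial

/-- The paper's `L_k` as a real polynomial. Mathlib's `Polynomial.shiftedLegendre k` is the
Rodrigues derivative of `(X - X²)ᵏ` rather than `(X² - X)ᵏ`, hence the sign `(-1)ᵏ`. -/
noncomputable def shiftedLegendreReal (k : ℕ) : ℝ[X] :=
  C ((-1) ^ k) * (Polynomial.shiftedLegendre k).map (Int.castRingHom ℝ)

theorem degree_shiftedLegendreReal (k : ℕ) : (shiftedLegendreReal k).degree = k := by
  rw [shiftedLegendreReal, degree_C_mul (by simp), degree_map_eq_of_injective
    (RingHom.injective_int _), degree_shiftedLegendre]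

theorem natDegree_shiftedLegendreReal (k : ℕ) : (shiftedLegendreReal k).natDegree = k :=
  natDegree_eq_of_degree_eq_some (degree_shiftedLegendreReal k)

theorem factorial_mul_shiftedLegendreReal (k : ℕ) :
    (k ! : ℝ[X]) * shiftedLegendreReal k = derivative^[k] ((X ^ 2 - X) ^ k) := by
  have h : (k ! : ℝ[X]) * (Polynomial.shiftedLegendre k).map (Int.castRingHom ℝ) =
      derivative^[k] (X ^ k * (1 - X) ^ k) := by
    simpa [← iterate_derivative_map] using
      congrArg (map (Int.castRingHom ℝ)) (factorial_mul_shiftedLegendre_eq k)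
  have hW : (X ^ 2 - X : ℝ[X]) ^ k = C ((-1) ^ k) * (X ^ k * (1 - X) ^ k) := by
    rw [C_pow, C_neg, C_1, ← mul_pow, ← mul_pow]; ring
  rw [hW, iterate_derivative_C_mul, shiftedLegendreReal, ← h]
  ring

theorem eval_one_shiftedLegendreReal (k : ℕ) : (shiftedLegendreReal k).eval 1 = 1 := by
  have h : (Polynomial.shiftedLegendre k).eval 1 = (-1) ^ k := by
    simpa [← coeff_zero_eq_eval_zero, coeff_shiftedLegendre] using
      shiftedLegendre_eval_symm k (1 : ℤ)
  simp [shiftedLegendreReal, h, ← mul_pow]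

theorem eval_zero_shiftedLegendreReal (k : ℕ) : (shiftedLegendreReal k).eval 0 = (-1) ^ k := by
  simp [shiftedLegendreReal, ← coeff_zero_eq_eval_zero, coeff_shiftedLegendre]

theorem integral_mul_shiftedLegendreReal (q : ℝ[X]) (k : ℕ) :
    ∫ x in (0 : ℝ)..1, q.eval x * (shiftedLegendreReal k).eval x =
      (-1) ^ k / k ! *
        ∫ x in (0 : ℝ)..1, (derivative^[k] q).eval x * ((X ^ 2 - X : ℝ[X]) ^ k).eval x := by
  have h := integral_eval_mul_eval_iterate_derivative_pow (p := X ^ 2 - X) (by simp) (by simp)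
    (a := 0) (b := 1) (k := k) (m := k) le_rfl q
  rw [← factorial_mul_shiftedLegendreReal] at h
  simp only [eval_mul, eval_natCast, mul_left_comm _ (k ! : ℝ),
    intervalIntegral.integral_const_mul] at h
  field_simp
  linear_combination h

theorem integral_mul_shiftedLegendreReal_eq_zero {q : ℝ[X]} {k : ℕ} (hq : q.natDegree < k) :
    ∫ x in (0 : ℝ)..1, q.eval x * (shiftedLegendreReal k).eval x = 0 := by
  simp [integral_mul_shiftedLegendreReal, iterate_derivative_eq_zero hq]

theorem integral_shiftedLegendreReal_mul_self (k : ℕ) :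
    ∫ x in (0 : ℝ)..1, (shiftedLegendreReal k).eval x * (shiftedLegendreReal k).eval x =
      1 / (2 * k + 1) := by
  have hlead : (shiftedLegendreReal k).leadingCoeff = (2 * k).choose k := by
    rw [leadingCoeff, natDegree_shiftedLegendreReal, shiftedLegendreReal, coeff_C_mul, coeff_map,
      coeff_shiftedLegendre]
    simp [← mul_assoc, ← mul_pow, two_mul]
  have hD : derivative^[k] (shiftedLegendreReal k) = C ((k ! * (2 * k).choose k : ℕ) : ℝ) := by
    simpa [natDegree_shiftedLegendreReal, hlead] using
      iterate_derivative_natDegree (shiftedLegendreReal k)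
  have hc : ((2 * k).choose k * k ! * k ! : ℝ) = (2 * k)! := by
    exact_mod_cast two_mul k ▸ Nat.add_choose_mul_factorial_mul_factorial k k
  rw [integral_mul_shiftedLegendreReal, hD]
  simp only [eval_C, intervalIntegral.integral_const_mul, integral_eval_X_sq_sub_X_pow]
  rw [Nat.factorial_succ]
  push_cast
  field_simp
  rw [← pow_mul, mul_comm k 2, pow_mul, neg_one_sq, one_pow, ← hc]
  ring

theorem integral_shiftedLegendreReal_mul_of_ne {i j : ℕ} (hij : i ≠ j) :
    ∫ x in (0 : ℝ)..1, (shiftedLegendreReal i).eval x * (shiftedLegendreReal j).eval x = 0 := by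
  rcases hij.lt_or_gt with h | h
  · exact integral_mul_shiftedLegendreReal_eq_zero ((natDegree_shiftedLegendreReal i).trans_lt h)
  · simp_rw [mul_comm ((shiftedLegendreReal i).eval _)]
    exact integral_mul_shiftedLegendreReal_eq_zero ((natDegree_shiftedLegendreReal j).trans_lt h)

theorem integral_shiftedLegendreReal_mul_sum_smul {s : Finset ℕ} (c : ℕ → ℝ) {i : ℕ}
    (hi : i ∈ s) :
    ∫ x in (0 : ℝ)..1, (shiftedLegendreReal i).eval x *
      (∑ j ∈ s, c j • shiftedLegendreReal j).eval x = c i / (2 * i + 1) := by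
  simp_rw [eval_finsetSum, eval_smul, smul_eq_mul, Finset.mul_sum, mul_left_comm _ (c _)]
  rw [intervalIntegral.integral_finsetSum
      fun j _ => (by fun_prop : Continuous _).intervalIntegrable _ _,
    Finset.sum_eq_single_of_mem i hi]
  · rw [intervalIntegral.integral_const_mul, integral_shiftedLegendreReal_mul_self, mul_one_div]
  · intro j _ hji
    rw [intervalIntegral.integral_const_mul, integral_shiftedLegendreReal_mul_of_ne hji.symm,
      mul_zero]

theorem derivative_shiftedLegendreReal (k : ℕ) :
    derivative (shiftedLegendreReal k) =
      ∑ j ∈ Finset.range k, C (ell k j) * shiftedLegendreReal j := by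
  let S : Sequence ℝ := ⟨shiftedLegendreReal, degree_shiftedLegendreReal⟩
  have hmem : derivative (shiftedLegendreReal k) ∈ degreeLT ℝ k := by
    rw [mem_degreeLT, ← degree_shiftedLegendreReal k]
    exact degree_derivative_lt (S.ne_zero k)
  rw [← S.span_degreeLT fun i _ => isUnit_iff_ne_zero.2 (leadingCoeff_ne_zero.2 (S.ne_zero i)),
    ← Finset.coe_range, Submodule.mem_span_image_finset_iff_exists_fun'] at hmem
  obtain ⟨c, hc⟩ := hmem
  change ∑ j ∈ _, c j • shiftedLegendreReal j = _ at hc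
  rw [← hc]
  refine Finset.sum_congr rfl fun i hi => ?_
  have hik := Finset.mem_range.1 hi
  have hcoeff := integral_shiftedLegendreReal_mul_sum_smul c hi
  rw [hc, integral_eval_mul_eval_derivative, eval_one_shiftedLegendreReal,
    eval_one_shiftedLegendreReal, eval_zero_shiftedLegendreReal, eval_zero_shiftedLegendreReal,
    integral_mul_shiftedLegendreReal_eq_zero] at hcoeff
  · rw [smul_eq_C_mul, ell, if_pos hik]
    field_simp at hcoeff
    rw [← hcoeff, pow_add]
    congr 2
    ring
  · exact (natDegree_derivative_le _).trans_lt (by rw [natDegree_shiftedLegendreReal]; omega)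

end ShiftedLegendreReal

theorem eval_shiftedLegendreReal (k : ℕ) (x : ℝ) :
    (shiftedLegendreReal k).eval x = shiftedLegendre k x := by
  have hW : (fun y : ℝ => (y ^ 2 - y) ^ k) =
      fun y => ((Polynomial.X ^ 2 - Polynomial.X : ℝ[X]) ^ k).eval y := by
    simp
  rw [shiftedLegendre, hW, Polynomial.iteratedDeriv_eval_s15, ← factorial_mul_shiftedLegendreReal]
  simp [field]

theorem continuous_shiftedLegendre (k : ℕ) : Continuous (shiftedLegendre k) := by
  simpa only [eval_shiftedLegendreReal] using (shiftedLegendreReal k).continuous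

theorem integral_sqrt_mul_shiftedLegendre_mul_sqrt_mul_shiftedLegendre (i j : ℕ) :
    ∫ x in (0 : ℝ)..1,
      (√(2 * i + 1) * shiftedLegendre i x) * (√(2 * j + 1) * shiftedLegendre j x) =
        if i = j then 1 else 0 := by
  have h (x : ℝ) :
      (√(2 * i + 1) * shiftedLegendre i x) * (√(2 * j + 1) * shiftedLegendre j x) =
        √(2 * i + 1) * √(2 * j + 1) *
        ((shiftedLegendreReal i).eval x * (shiftedLegendreReal j).eval x) := by
    rw [eval_shiftedLegendreReal, eval_shiftedLegendreReal]; ring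
  simp_rw [h, intervalIntegral.integral_const_mul]
  split_ifs with hij
  · subst hij
    rw [integral_shiftedLegendreReal_mul_self, Real.mul_self_sqrt (by positivity)]
    field_simp
  · rw [integral_shiftedLegendreReal_mul_of_ne hij, mul_zero]

theorem integral_shiftedLegendre_mul_deriv {u : ℝ → ℝ} (hu : ContDiff ℝ 1 u) (k : ℕ) :
    ∫ x in (0 : ℝ)..1, shiftedLegendre k x * deriv u x =
      u 1 - (-1) ^ k * u 0 -
        ∑ j ∈ Finset.range k, ell k j * ∫ x in (0 : ℝ)..1, u x * shiftedLegendre j x := by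
  simp_rw [← eval_shiftedLegendreReal]
  rw [intervalIntegral.integral_mul_deriv_eq_deriv_mul
      (fun x _ => (shiftedLegendreReal k).hasDerivAt x)
      (fun x _ => (hu.differentiable one_ne_zero x).hasDerivAt)
      ((Polynomial.derivative _).continuous.intervalIntegrable _ _)
      ((hu.continuous_deriv le_rfl).intervalIntegrable _ _),
    eval_one_shiftedLegendreReal, eval_zero_shiftedLegendreReal, derivative_shiftedLegendreReal]
  simp_rw [Polynomial.eval_finsetSum, Polynomial.eval_mul, Polynomial.eval_C, Finset.sum_mul,
    mul_assoc]
  have hu_cont := hu.continuous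
  rw [intervalIntegral.integral_finsetSum
    fun j _ => (by fun_prop : Continuous _).intervalIntegrable _ _]
  simp_rw [intervalIntegral.integral_const_mul, mul_comm ((shiftedLegendreReal _).eval _) (u _)]
  ring

/-- Bessel bound for the spatial derivative in projected coordinates:
for continuously differentiable `u` and every `N`,
`∫₀¹ (u')² ≥ Σ_{k=0}^{N+1} (2k+1) (u(1) − (−1)^k u(0) − Σ_{j<k} ℓ_{kj} ⟨u, L_j⟩)²`. -/
theorem bessel_spatial_derivative (u : ℝ → ℝ) (hu : ContDiff ℝ 1 u) (N : ℕ) :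
    (∫ x in (0:ℝ)..1, (deriv u x) ^ 2) ≥
      ∑ k ∈ Finset.range (N + 2),
        (2 * (k : ℝ) + 1) *
          (u 1 - (-1 : ℝ) ^ k * u 0
            - ∑ j ∈ Finset.range k, ell k j * ∫ x in (0:ℝ)..1, u x * shiftedLegendre j x) ^ 2 := by
  have bessel := sum_sq_integral_mul_le_integral_sq zero_le_one
    (e := fun (k : ℕ) x => √(2 * k + 1) * shiftedLegendre k x)
    (fun k => continuous_const.mul (continuous_shiftedLegendre k))
    integral_sqrt_mul_shiftedLegendre_mul_sqrt_mul_shiftedLegendre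
    (hu.continuous_deriv le_rfl) (Finset.range (N + 2))
  simp_rw [mul_assoc, intervalIntegral.integral_const_mul, mul_pow,
    Real.sq_sqrt (by positivity : (0 : ℝ) ≤ 2 * (_ : ℕ) + 1),
    integral_shiftedLegendre_mul_deriv hu] at bessel
  exact bessel
end
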